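/- arXiv:1811.02554 — 3 statements merged into one kernel-verified Lean document; each statement's English description precedes it below -/
import Mathlib

section
/- For fixed γ ≥ 1, the function F(u) = ∫₀¹ (ω² + u²)^γ / u dω is strictly convex and continuous on (0, ∞). -/
open intervalIntegral Set Real

/-- `x ^ p` is strictly convex on `(0, ∞)` for negative `p`. -/
lemma aux_strictConvexOn_rpow_neg {p : ℝ} (hp : p < 0) :
    StrictConvexOn ℝ (Set.Ioi (0:ℝ)) (fun x : ℝ => x ^ p) := by
  apply strictConvexOn_of_deriv2_pos (convex_Ioi 0)
  · intro x hx
    exact (Real.continuousAt_rpow_const x p (Or.inl (ne_of_gt hx))).continuousWithinAt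
  · intro x hx
    rw [interior_Ioi, mem_Ioi] at hx
    have hev : deriv (fun x : ℝ => x ^ p) =ᶠ[nhds x] fun y => p * y ^ (p - 1) := by
      filter_upwards [Ioi_mem_nhds hx] with y hy
      exact Real.deriv_rpow_const y p
    have h2 : deriv^[2] (fun x : ℝ => x ^ p) x
        = deriv (fun y : ℝ => p * y ^ (p - 1)) x := by
      simp only [Function.iterate_succ, Function.iterate_zero, Function.comp_apply, id]
      exact Filter.EventuallyEq.deriv_eq hev
    rw [h2, ((Real.hasDerivAt_rpow_const (p := p - 1)
      (Or.inl (ne_of_gt hx))).const_mul p).deriv]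
    have : 0 < p * (p - 1) := mul_pos_of_neg_of_neg hp (by linarith)
    have := Real.rpow_pos_of_pos hx (p - 1 - 1)
    nlinarith

/-- Key pointwise lemma: for `ω > 0` and `γ ≥ 1`, `u ↦ (ω²+u²)^γ / u` is
strictly convex on `(0, ∞)`. -/
lemma aux_key {γ ω : ℝ} (hγ : 1 ≤ γ) (hω : 0 < ω) :
    StrictConvexOn ℝ (Set.Ioi (0:ℝ)) (fun u : ℝ => (ω ^ 2 + u ^ 2) ^ γ / u) := by
  have hγ0 : (0:ℝ) < γ := by linarith
  set p : ℝ := -1 / γ with hp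
  have hpneg : p < 0 := by
    rw [hp]; exact div_neg_of_neg_of_pos (by norm_num) hγ0
  -- the inner function
  set f : ℝ → ℝ := fun u => ω ^ 2 * u ^ p + u ^ (2 + p) with hf
  have h2p : (1:ℝ) ≤ 2 + p := by
    rw [hp]
    have : 1 / γ ≤ 1 := by
      rw [div_le_one hγ0]; exact hγ
    have : -1 / γ = -(1/γ) := by ring
    rw [this]; linarith
  -- f is strictly convex on (0,∞)
  have hω2 : (0:ℝ) < ω ^ 2 := by positivity
  have hfconv : StrictConvexOn ℝ (Set.Ioi (0:ℝ)) f := by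
    apply StrictConvexOn.add_convexOn
    · obtain ⟨hc, hlt⟩ := aux_strictConvexOn_rpow_neg hpneg
      refine ⟨hc, fun x hx y hy hxy a b ha hb hab => ?_⟩
      have h := hlt hx hy hxy ha hb hab
      simp only [smul_eq_mul] at h ⊢
      nlinarith [mul_lt_mul_of_pos_left h hω2]
    · exact ((convexOn_rpow h2p).subset Ioi_subset_Ici_self (convex_Ioi 0))
  -- f maps into (0,∞)
  have hfpos : ∀ u : ℝ, u ∈ Set.Ioi (0:ℝ) → 0 < f u := by
    intro u hu
    rw [mem_Ioi] at hu
    have := Real.rpow_pos_of_pos hu p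
    have := Real.rpow_pos_of_pos hu (2 + p)
    positivity
  -- the outer function x ↦ x ^ γ is convex and strictly monotone on [0,∞)
  have hgconv : ConvexOn ℝ (Set.Ici (0:ℝ)) (fun x : ℝ => x ^ γ) := convexOn_rpow hγ
  have hgmono : StrictMonoOn (fun x : ℝ => x ^ γ) (Set.Ici (0:ℝ)) :=
    fun x hx y _ hxy => Real.rpow_lt_rpow hx hxy hγ0
  -- composition is strictly convex
  have hcomp : StrictConvexOn ℝ (Set.Ioi (0:ℝ)) (fun u => (f u) ^ γ) := by
    refine ⟨convex_Ioi 0, fun x hx y hy hxy a b ha hb hab => ?_⟩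
    have hfx := (hfpos x hx).le
    have hfy := (hfpos y hy).le
    have hmem : a • x + b • y ∈ Set.Ioi (0:ℝ) :=
      (convex_Ioi (0:ℝ)) hx hy ha.le hb.le hab
    have h1 : f (a • x + b • y) < a • f x + b • f y :=
      hfconv.2 hx hy hxy ha hb hab
    calc (f (a • x + b • y)) ^ γ
        < (a • f x + b • f y) ^ γ := by
          apply hgmono (hfpos _ hmem).le _ h1
          simp only [smul_eq_mul]
          have : 0 ≤ a * f x + b * f y := by
            have := mul_nonneg ha.le hfx
            have := mul_nonneg hb.le hfy
            linarith
          exact this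
      _ ≤ a • (f x) ^ γ + b • (f y) ^ γ := hgconv.2 hfx hfy ha.le hb.le hab
  -- the composition equals the target on (0,∞)
  refine ⟨convex_Ioi 0, fun x hx y hy hxy a b ha hb hab => ?_⟩
  have heq : ∀ u : ℝ, u ∈ Set.Ioi (0:ℝ) → (f u) ^ γ = (ω ^ 2 + u ^ 2) ^ γ / u := by
    intro u hu
    rw [mem_Ioi] at hu
    have h1 : f u = (ω ^ 2 + u ^ 2) * u ^ p := by
      have h2 : u ^ (2 + p) = u ^ (2:ℝ) * u ^ p := Real.rpow_add hu 2 p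
      simp only [hf]
      rw [h2, Real.rpow_two]
      ring
    rw [h1, Real.mul_rpow (by positivity) (Real.rpow_pos_of_pos hu p).le,
      ← Real.rpow_natCast u 2]
    rw [← Real.rpow_mul hu.le p γ]
    have hpγ : p * γ = -1 := by
      rw [hp]; field_simp
    rw [hpγ, Real.rpow_neg_one, div_eq_mul_inv]
  have hmem : a • x + b • y ∈ Set.Ioi (0:ℝ) :=
    (convex_Ioi (0:ℝ)) hx hy ha.le hb.le hab
  have h := hcomp.2 hx hy hxy ha hb hab
  simpa only [heq _ hx, heq _ hy, heq _ hmem] using h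


section mainproof
variable (γ : ℝ)

lemma aux_cont_rpow (hγ : 1 ≤ γ) : Continuous (fun x : ℝ => x ^ γ) :=
  continuous_iff_continuousAt.mpr fun x =>
    Real.continuousAt_rpow_const x γ (Or.inr (by linarith))

lemma aux_integrable (hγ : 1 ≤ γ) (u : ℝ) :
    IntervalIntegrable (fun ω : ℝ => (ω ^ 2 + u ^ 2) ^ γ / u) MeasureTheory.volume 0 1 := by
  apply Continuous.intervalIntegrable
  exact ((aux_cont_rpow γ hγ).comp (by continuity)).div_const u

end mainproof

/-- For fixed `γ ≥ 1`, the function `F(u) = ∫₀¹ (ω² + u²)^γ / u dω` is strictly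
convex and continuous on `(0, ∞)`. -/
theorem stmt_1 (γ : ℝ) (hγ : 1 ≤ γ) :
    StrictConvexOn ℝ (Set.Ioi (0 : ℝ))
      (fun u : ℝ => ∫ ω in (0:ℝ)..1, (ω ^ 2 + u ^ 2) ^ γ / u) ∧
    ContinuousOn (fun u : ℝ => ∫ ω in (0:ℝ)..1, (ω ^ 2 + u ^ 2) ^ γ / u)
      (Set.Ioi (0 : ℝ)) := by
  have key : ∀ ω : ℚ, True := fun _ => trivial
  constructor
  · refine ⟨convex_Ioi 0, fun u hu v hv huv a b ha hb hab => ?_⟩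
    simp only [smul_eq_mul]
    have hu' : (0:ℝ) < u := hu
    have hv' : (0:ℝ) < v := hv
    set w : ℝ := a * u + b * v with hwdef
    have hw : (0:ℝ) < w := by positivity
    have hwmem : w ∈ Set.Ioi (0:ℝ) := hw
    -- pointwise strict inequality for ω ∈ (0,1)
    have hpt : ∀ ω ∈ Set.Ioo (0:ℝ) 1,
        0 < a * ((ω ^ 2 + u ^ 2) ^ γ / u) + b * ((ω ^ 2 + v ^ 2) ^ γ / v)
          - (ω ^ 2 + w ^ 2) ^ γ / w := by
      intro ω hω
      have h := (aux_key hγ hω.1).2 hu hv huv ha hb hab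
      simp only [smul_eq_mul] at h
      linarith
    have hInt : IntervalIntegrable
        (fun ω : ℝ => a * ((ω ^ 2 + u ^ 2) ^ γ / u) + b * ((ω ^ 2 + v ^ 2) ^ γ / v)
          - (ω ^ 2 + w ^ 2) ^ γ / w) MeasureTheory.volume 0 1 :=
      (((aux_integrable γ hγ u).const_mul a).add
        ((aux_integrable γ hγ v).const_mul b)).sub (aux_integrable γ hγ w)
    have hpos := intervalIntegral_pos_of_pos_on hInt hpt one_pos
    rw [intervalIntegral.integral_sub (((aux_integrable γ hγ u).const_mul a).add
        ((aux_integrable γ hγ v).const_mul b)) (aux_integrable γ hγ w),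
      intervalIntegral.integral_add ((aux_integrable γ hγ u).const_mul a)
        ((aux_integrable γ hγ v).const_mul b),
      intervalIntegral.integral_const_mul, intervalIntegral.integral_const_mul] at hpos
    linarith
  · have hG : Continuous (fun u : ℝ => ∫ ω in (0:ℝ)..1, (ω ^ 2 + u ^ 2) ^ γ) := by
      apply intervalIntegral.continuous_parametric_intervalIntegral_of_continuous'
      exact (aux_cont_rpow γ hγ).comp (by continuity)
    have heq : (fun u : ℝ => ∫ ω in (0:ℝ)..1, (ω ^ 2 + u ^ 2) ^ γ / u)
        = fun u : ℝ => (∫ ω in (0:ℝ)..1, (ω ^ 2 + u ^ 2) ^ γ) / u := by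
      funext u
      exact intervalIntegral.integral_div u _
    rw [heq]
    exact hG.continuousOn.div continuousOn_id fun x hx => ne_of_gt hx
end

section
/- For γ ≥ 1, any critical point u > 0 of F(u) = ∫₀¹ (ω² + u²)^γ / u dω satisfies u < 1/√(2γ−1). In particular, the unique global minimizer g(γ) of F satisfies g(γ) < 1/√(2γ−1). -/
open intervalIntegral MeasureTheory Set Metric

private lemma cont_rpow (u p : ℝ) (hu : 0 < u) :
    Continuous (fun ω : ℝ => (ω ^ 2 + u ^ 2) ^ p) := by
  apply Continuous.rpow_const (by continuity)
  intro x
  exact Or.inl (by positivity)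

private lemma key_deriv (γ : ℝ) (hγ : 1 ≤ γ) (u : ℝ) (hu : 0 < u) :
    HasDerivAt (fun v : ℝ => ∫ ω in (0:ℝ)..1, (ω ^ 2 + v ^ 2) ^ γ / v)
      ((∫ ω in (0:ℝ)..1, (ω ^ 2 + u ^ 2) ^ (γ - 1) * ((2 * γ - 1) * u ^ 2 - ω ^ 2)) / u ^ 2)
      u := by
  have hγ0 : 0 ≤ γ - 1 := by linarith
  -- derivative of the inner integral
  have hG : HasDerivAt (fun v : ℝ => ∫ ω in (0:ℝ)..1, (ω ^ 2 + v ^ 2) ^ γ)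
      (∫ ω in (0:ℝ)..1, γ * (ω ^ 2 + u ^ 2) ^ (γ - 1) * (2 * u)) u := by
    have hball : ∀ x : ℝ, x ∈ ball u (u / 2) → u / 2 < x ∧ x < 2 * u := by
      intro x hx
      rw [mem_ball, Real.dist_eq, abs_lt] at hx
      constructor <;> linarith [hx.1, hx.2]
    have := (intervalIntegral.hasDerivAt_integral_of_dominated_loc_of_deriv_le
      (F := fun (v : ℝ) (ω : ℝ) => (ω ^ 2 + v ^ 2) ^ γ)
      (F' := fun (v : ℝ) (ω : ℝ) => γ * (ω ^ 2 + v ^ 2) ^ (γ - 1) * (2 * v))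
      (bound := fun _ => γ * (1 + (2 * u) ^ 2) ^ (γ - 1) * (2 * (2 * u)))
      (x₀ := u) (a := 0) (b := 1) (μ := volume) (s := ball u (u / 2))
      (ball_mem_nhds u (by positivity))
      ?_ ?_ ?_ ?_ ?_ ?_).2
    · exact this
    · filter_upwards with x
      exact (Continuous.rpow_const (by continuity)
        (fun y => Or.inr (by linarith))).aestronglyMeasurable
    · exact ((cont_rpow u γ hu).intervalIntegrable 0 1)
    · exact ((continuous_const.mul (cont_rpow u (γ - 1) hu)).mul
        continuous_const).aestronglyMeasurable
    · filter_upwards with ω hω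
      intro x hx
      obtain ⟨hx1, hx2⟩ := hball x hx
      have hω1 : ω ∈ Set.Ioc (0:ℝ) 1 := by
        simpa [Set.uIoc_of_le (by norm_num : (0:ℝ) ≤ 1)] using hω
      have hxpos : 0 < x := lt_trans (by positivity) hx1
      have h1 : (ω ^ 2 + x ^ 2) ^ (γ - 1) ≤ (1 + (2 * u) ^ 2) ^ (γ - 1) := by
        apply Real.rpow_le_rpow (by positivity) _ hγ0
        have h2 : ω ^ 2 ≤ 1 := by
          rw [sq_le_one_iff_abs_le_one, abs_le]
          exact ⟨by linarith [hω1.1], hω1.2⟩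
        have h3 : x ^ 2 ≤ (2 * u) ^ 2 := by
          apply sq_le_sq' <;> nlinarith
        linarith
      have hγpos : 0 < γ := by linarith
      rw [Real.norm_eq_abs, abs_of_nonneg (by positivity)]
      have h4 : 2 * x ≤ 2 * (2 * u) := by linarith
      have hb : (0:ℝ) ≤ (ω ^ 2 + x ^ 2) ^ (γ - 1) := by positivity
      calc γ * (ω ^ 2 + x ^ 2) ^ (γ - 1) * (2 * x)
          ≤ γ * (1 + (2 * u) ^ 2) ^ (γ - 1) * (2 * x) := by
            apply mul_le_mul_of_nonneg_right _ (by positivity)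
            exact mul_le_mul_of_nonneg_left h1 hγpos.le
        _ ≤ γ * (1 + (2 * u) ^ 2) ^ (γ - 1) * (2 * (2 * u)) := by
            apply mul_le_mul_of_nonneg_left h4 (by positivity)
    · exact intervalIntegrable_const
    · filter_upwards with ω hω
      intro x hx
      obtain ⟨hx1, hx2⟩ := hball x hx
      have hxpos : 0 < x := lt_trans (by positivity) hx1
      have hbase : 0 < ω ^ 2 + x ^ 2 := by positivity
      have hinner : HasDerivAt (fun y : ℝ => ω ^ 2 + y ^ 2) (2 * x) x := by
        simpa using (hasDerivAt_pow 2 x).const_add (ω ^ 2)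
      have h := hinner.rpow_const (Or.inr hγ)
      refine h.congr_deriv ?_
      ring
  -- quotient rule
  have hF : HasDerivAt (fun v : ℝ => (∫ ω in (0:ℝ)..1, (ω ^ 2 + v ^ 2) ^ γ) / v)
      (((∫ ω in (0:ℝ)..1, γ * (ω ^ 2 + u ^ 2) ^ (γ - 1) * (2 * u)) * u -
        (∫ ω in (0:ℝ)..1, (ω ^ 2 + u ^ 2) ^ γ) * 1) / u ^ 2) u :=
    hG.div (hasDerivAt_id u) hu.ne'
  have hfun : (fun v : ℝ => (∫ ω in (0:ℝ)..1, (ω ^ 2 + v ^ 2) ^ γ) / v) =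
      (fun v : ℝ => ∫ ω in (0:ℝ)..1, (ω ^ 2 + v ^ 2) ^ γ / v) := by
    funext v
    rw [intervalIntegral.integral_div]
  rw [hfun] at hF
  convert hF using 2
  have hident : ∀ ω : ℝ, (ω ^ 2 + u ^ 2) ^ (γ - 1) * ((2 * γ - 1) * u ^ 2 - ω ^ 2) =
      γ * (ω ^ 2 + u ^ 2) ^ (γ - 1) * (2 * u) * u - (ω ^ 2 + u ^ 2) ^ γ := by
    intro ω
    have hbase : 0 < ω ^ 2 + u ^ 2 := by positivity
    have h5 : (ω ^ 2 + u ^ 2) ^ γ = (ω ^ 2 + u ^ 2) ^ (γ - 1) * (ω ^ 2 + u ^ 2) := by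
      have h6 := Real.rpow_add hbase (γ - 1) 1
      rw [Real.rpow_one, show γ - 1 + 1 = γ by ring] at h6
      exact h6
    rw [h5]; ring
  have hi1 : IntervalIntegrable (fun ω : ℝ => γ * (ω ^ 2 + u ^ 2) ^ (γ - 1) * (2 * u) * u)
      volume 0 1 :=
    (((continuous_const.mul (cont_rpow u (γ-1) hu)).mul continuous_const).mul
      continuous_const).intervalIntegrable 0 1
  have hi2 : IntervalIntegrable (fun ω : ℝ => (ω ^ 2 + u ^ 2) ^ γ) volume 0 1 :=
    (cont_rpow u γ hu).intervalIntegrable 0 1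
  calc ∫ ω in (0:ℝ)..1, (ω ^ 2 + u ^ 2) ^ (γ - 1) * ((2 * γ - 1) * u ^ 2 - ω ^ 2)
      = ∫ ω in (0:ℝ)..1, (γ * (ω ^ 2 + u ^ 2) ^ (γ - 1) * (2 * u) * u -
          (ω ^ 2 + u ^ 2) ^ γ) := by
        apply intervalIntegral.integral_congr
        intro ω _
        exact hident ω
    _ = (∫ ω in (0:ℝ)..1, γ * (ω ^ 2 + u ^ 2) ^ (γ - 1) * (2 * u) * u) -
          ∫ ω in (0:ℝ)..1, (ω ^ 2 + u ^ 2) ^ γ := intervalIntegral.integral_sub hi1 hi2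
    _ = (∫ ω in (0:ℝ)..1, γ * (ω ^ 2 + u ^ 2) ^ (γ - 1) * (2 * u)) * u -
          (∫ ω in (0:ℝ)..1, (ω ^ 2 + u ^ 2) ^ γ) * 1 := by
        rw [intervalIntegral.integral_mul_const, mul_one]

private lemma deriv_pos (γ : ℝ) (hγ : 1 ≤ γ) (u : ℝ) (hu : 0 < u)
    (hbig : 1 / Real.sqrt (2 * γ - 1) ≤ u) :
    0 < (∫ ω in (0:ℝ)..1, (ω ^ 2 + u ^ 2) ^ (γ - 1) * ((2 * γ - 1) * u ^ 2 - ω ^ 2)) / u ^ 2 := by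
  have h2γ : 0 < 2 * γ - 1 := by linarith
  have hs : 0 < Real.sqrt (2 * γ - 1) := Real.sqrt_pos.mpr h2γ
  have hu2 : 1 ≤ (2 * γ - 1) * u ^ 2 := by
    have h2 : (1 / Real.sqrt (2 * γ - 1)) ^ 2 ≤ u ^ 2 :=
      pow_le_pow_left₀ (by positivity) hbig 2
    have h3 : (1 / Real.sqrt (2 * γ - 1)) ^ 2 = 1 / (2 * γ - 1) := by
      rw [div_pow, one_pow, Real.sq_sqrt h2γ.le]
    rw [h3, div_le_iff₀ h2γ] at h2
    nlinarith
  apply div_pos _ (by positivity)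
  apply intervalIntegral_pos_of_pos_on
  · exact ((cont_rpow u (γ-1) hu).mul (by continuity)).intervalIntegrable 0 1
  · intro ω hω
    have h1 : 0 < (ω ^ 2 + u ^ 2) ^ (γ - 1) := Real.rpow_pos_of_pos (by positivity) _
    have h2 : ω ^ 2 < 1 := by
      rw [sq_lt_one_iff_abs_lt_one, abs_lt]
      exact ⟨by linarith [hω.1], hω.2⟩
    have h3 : 0 < (2 * γ - 1) * u ^ 2 - ω ^ 2 := by linarith
    positivity
  · norm_num

/-- For `γ ≥ 1`, any critical point `u > 0` of `F(u) = ∫₀¹ (ω² + u²)^γ / u dω`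
satisfies `u < 1/√(2γ−1)`; in particular any global minimizer `g` of `F` over
`(0,∞)` satisfies `g < 1/√(2γ−1)`. -/
theorem stmt_2 (γ : ℝ) (hγ : 1 ≤ γ) :
    (∀ u : ℝ, 0 < u →
      HasDerivAt (fun v : ℝ => ∫ ω in (0:ℝ)..1, (ω ^ 2 + v ^ 2) ^ γ / v) 0 u →
      u < 1 / Real.sqrt (2 * γ - 1)) ∧
    (∀ g : ℝ, 0 < g →
      (∀ u : ℝ, 0 < u →
        (∫ ω in (0:ℝ)..1, (ω ^ 2 + g ^ 2) ^ γ / g) ≤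
          ∫ ω in (0:ℝ)..1, (ω ^ 2 + u ^ 2) ^ γ / u) →
      g < 1 / Real.sqrt (2 * γ - 1)) := by
  have part1 : ∀ u : ℝ, 0 < u →
      HasDerivAt (fun v : ℝ => ∫ ω in (0:ℝ)..1, (ω ^ 2 + v ^ 2) ^ γ / v) 0 u →
      u < 1 / Real.sqrt (2 * γ - 1) := by
    intro u hu hd
    by_contra hle
    push_neg at hle
    have hD := key_deriv γ hγ u hu
    have hpos := deriv_pos γ hγ u hu hle
    have := hd.unique hD
    linarith [this ▸ hpos]
  refine ⟨part1, ?_⟩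
  intro g hg hmin
  apply part1 g hg
  have hD := key_deriv γ hγ g hg
  have hloc : IsLocalMin (fun v : ℝ => ∫ ω in (0:ℝ)..1, (ω ^ 2 + v ^ 2) ^ γ / v) g := by
    have hnbhd : Set.Ioi (0:ℝ) ∈ nhds g := Ioi_mem_nhds hg
    filter_upwards [hnbhd] with u hu
    exact hmin u hu
  have := hloc.hasDerivAt_eq_zero hD
  rwa [this] at hD
end

section
/- Let N ∈ ℕ, A > 0, γ ≥ 1, and let g(γ) be the unique minimizer of F(u) = ∫₀¹ (ω² + u²)^γ/u dω over u > 0. The unique N-level parameter optimized quantizer for uniform density on [0, A] — minimizing ∑ₙ ∫_{R_n} ((x_n − ω)² + h_n²)^γ/(h_n·A) dω over all partitions {R_n} of [0,A] into intervals, points x_n ∈ [0,A], and parameters h_n > 0 — is the uniform scalar quantizer: x_n* = (2n−1)A/(2N), h_n* = (A/(2N))·g(γ), R_n* = [(n−1)A/N, nA/N], with minimum average distortion (A/(2N))^{2γ−1} ∫₀¹ (ω² + g(γ)²)^γ/g(γ) dω. -/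
open intervalIntegral MeasureTheory

noncomputable def qf (γ h t : ℝ) : ℝ := (t ^ 2 + h ^ 2) ^ γ / h

noncomputable def qF (γ u : ℝ) : ℝ := ∫ ω in (0:ℝ)..1, (ω ^ 2 + u ^ 2) ^ γ / u

lemma qf_cont (γ h : ℝ) (hγ : 0 ≤ γ) : Continuous (qf γ h) := by
  exact (((continuous_id.pow 2).add continuous_const).rpow_const
    (fun x => Or.inr hγ)).div_const h

lemma qf_even (γ h t : ℝ) : qf γ h (-t) = qf γ h t := by simp [qf]

lemma qf_lt (γ h : ℝ) (hγ : 1 ≤ γ) (hh : 0 < h) {s t : ℝ} (hst : s ^ 2 < t ^ 2) :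
    qf γ h s < qf γ h t := by
  unfold qf
  exact (div_lt_div_iff_of_pos_right hh).mpr
    (Real.rpow_lt_rpow (by positivity) (by linarith) (by linarith))

lemma qF_pos (γ u : ℝ) (hγ : 1 ≤ γ) (hu : 0 < u) : 0 < qF γ u := by
  have h1 : (0:ℝ) < (u ^ 2) ^ γ / u :=
    div_pos (Real.rpow_pos_of_pos (by positivity) _) hu
  have h2 : ((u ^ 2) ^ γ / u) ≤ qF γ u := by
    have := intervalIntegral.integral_mono_on (μ := volume) (a := (0:ℝ)) (b := 1) (by norm_num)
      (_root_.intervalIntegrable_const)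
      ((qf_cont γ u (by linarith)).intervalIntegrable 0 1)
      (fun ω _ => by
        unfold qf
        have key : ((u:ℝ) ^ 2) ^ γ ≤ (ω ^ 2 + u ^ 2) ^ γ :=
          Real.rpow_le_rpow (by positivity) (by nlinarith [sq_nonneg ω]) (by linarith)
        exact (div_le_div_iff_of_pos_right hu).mpr key)
    simpa [qF, qf] using this
  calc (0:ℝ) < (u ^ 2) ^ γ / u := h1
    _ ≤ qF γ u := h2

noncomputable def qΦ (γ h L s : ℝ) : ℝ := ∫ t in s..(s + L), qf γ h t

lemma qΦ_eq (γ h L s : ℝ) (hγ : 0 ≤ γ) :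
    qΦ γ h L s = (∫ t in (0:ℝ)..(s + L), qf γ h t) - ∫ t in (0:ℝ)..s, qf γ h t := by
  rw [qΦ, intervalIntegral.integral_interval_sub_left]
  · exact ((qf_cont γ h hγ).intervalIntegrable _ _)
  · exact ((qf_cont γ h hγ).intervalIntegrable _ _)

lemma qΦ_hasDerivAt (γ h L : ℝ) (hγ : 0 ≤ γ) (s : ℝ) :
    HasDerivAt (qΦ γ h L) (qf γ h (s + L) - qf γ h s) s := by
  have hc := qf_cont γ h hγ
  have h1 : HasDerivAt (fun u : ℝ => ∫ t in (0:ℝ)..u, qf γ h t) (qf γ h s) s :=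
    (hc.integral_hasStrictDerivAt 0 s).hasDerivAt
  have h2 : HasDerivAt (fun u : ℝ => ∫ t in (0:ℝ)..(u + L), qf γ h t) (qf γ h (s + L)) s := by
    have := ((hc.integral_hasStrictDerivAt 0 (s + L)).hasDerivAt).comp s
      ((hasDerivAt_id s).add_const L)
    simpa [Function.comp_def] using this
  have := h2.sub h1
  refine this.congr_of_eventuallyEq ?_
  filter_upwards with u
  rw [qΦ_eq γ h L u hγ]; rfl

lemma qΦ_strictMonoOn (γ h L : ℝ) (hγ : 1 ≤ γ) (hh : 0 < h) (hL : 0 < L) :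
    StrictMonoOn (qΦ γ h L) (Set.Ici (-(L / 2))) := by
  apply strictMonoOn_of_deriv_pos (convex_Ici _)
  · exact Continuous.continuousOn (by
      have : ∀ s, HasDerivAt (qΦ γ h L) (qf γ h (s + L) - qf γ h s) s :=
        qΦ_hasDerivAt γ h L (by linarith)
      exact continuous_iff_continuousAt.mpr fun s => (this s).continuousAt)
  · intro s hs
    rw [interior_Ici] at hs
    rw [(qΦ_hasDerivAt γ h L (by linarith) s).deriv]
    have : s ^ 2 < (s + L) ^ 2 := by nlinarith [Set.mem_Ioi.mp hs]
    linarith [qf_lt γ h hγ hh this]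

lemma qΦ_strictAntiOn (γ h L : ℝ) (hγ : 1 ≤ γ) (hh : 0 < h) (hL : 0 < L) :
    StrictAntiOn (qΦ γ h L) (Set.Iic (-(L / 2))) := by
  apply strictAntiOn_of_deriv_neg (convex_Iic _)
  · exact Continuous.continuousOn (by
      have : ∀ s, HasDerivAt (qΦ γ h L) (qf γ h (s + L) - qf γ h s) s :=
        qΦ_hasDerivAt γ h L (by linarith)
      exact continuous_iff_continuousAt.mpr fun s => (this s).continuousAt)
  · intro s hs
    rw [interior_Iic] at hs
    rw [(qΦ_hasDerivAt γ h L (by linarith) s).deriv]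
    have : (s + L) ^ 2 < s ^ 2 := by nlinarith [Set.mem_Iio.mp hs]
    linarith [qf_lt γ h hγ hh this]

lemma qΦ_min (γ h L : ℝ) (hγ : 1 ≤ γ) (hh : 0 < h) (hL : 0 < L) (s : ℝ) :
    qΦ γ h L (-(L / 2)) ≤ qΦ γ h L s ∧
      (qΦ γ h L s = qΦ γ h L (-(L / 2)) → s = -(L / 2)) := by
  rcases lt_trichotomy s (-(L / 2)) with hlt | heq | hgt
  · have := qΦ_strictAntiOn γ h L hγ hh hL (Set.mem_Iic.mpr hlt.le)
      (Set.mem_Iic.mpr le_rfl) hlt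
    exact ⟨this.le, fun he => absurd he this.ne'⟩
  · simp [heq]
  · have := qΦ_strictMonoOn γ h L hγ hh hL (Set.mem_Ici.mpr le_rfl)
      (Set.mem_Ici.mpr hgt.le) hgt
    exact ⟨this.le, fun he => absurd he this.ne'⟩


lemma int_zero_c (γ h c : ℝ) (hγ : 1 ≤ γ) (hh : 0 < h) (hc : 0 < c) :
    (∫ t in (0:ℝ)..c, qf γ h t) = c ^ (2 * γ) * qF γ (h / c) := by
  have h1 : (c • ∫ x in (0:ℝ)..1, qf γ h (c * x)) = ∫ x in (0:ℝ)..c, qf γ h x := by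
    simpa using intervalIntegral.smul_integral_comp_mul_left (qf γ h) (a := 0) (b := 1) c
  have h2 : ∀ x : ℝ, qf γ h (c * x) = c ^ (2 * γ - 1) * ((x ^ 2 + (h / c) ^ 2) ^ γ / (h / c)) := by
    intro x
    have hbase : (c * x) ^ 2 + h ^ 2 = c ^ 2 * (x ^ 2 + (h / c) ^ 2) := by
      field_simp
    have hp : (c:ℝ) ^ (2:ℕ) = c ^ ((2:ℕ):ℝ) := (Real.rpow_natCast c 2).symm
    rw [qf, hbase, Real.mul_rpow (by positivity) (by positivity), hp,
      ← Real.rpow_mul hc.le, Real.rpow_sub hc]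
    push_cast
    rw [Real.rpow_one]
    field_simp
  have h3 : (∫ x in (0:ℝ)..1, qf γ h (c * x))
      = c ^ (2 * γ - 1) * qF γ (h / c) := by
    rw [intervalIntegral.integral_congr (g := fun x => c ^ (2 * γ - 1) *
      ((x ^ 2 + (h / c) ^ 2) ^ γ / (h / c))) (fun x _ => h2 x),
      intervalIntegral.integral_const_mul]
    rfl
  rw [← h1, h3, smul_eq_mul, ← mul_assoc]
  congr 1
  rw [Real.rpow_sub hc, Real.rpow_one]
  field_simp

lemma qΦ_val (γ h L : ℝ) (hγ : 1 ≤ γ) (hh : 0 < h) (hL : 0 < L) :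
    qΦ γ h L (-(L / 2)) = 2 * (L / 2) ^ (2 * γ) * qF γ (h / (L / 2)) := by
  have hc : (0:ℝ) < L / 2 := by linarith
  have hint : ∀ p q : ℝ, IntervalIntegrable (qf γ h) MeasureTheory.volume p q :=
    fun p q => (qf_cont γ h (by linarith : (0:ℝ) ≤ γ)).intervalIntegrable p q
  have hsplit : qΦ γ h L (-(L / 2))
      = (∫ t in (-(L/2))..(0:ℝ), qf γ h t) + ∫ t in (0:ℝ)..(L/2), qf γ h t := by
    rw [qΦ]
    have : -(L / 2) + L = L / 2 := by ring
    rw [this]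
    exact (intervalIntegral.integral_add_adjacent_intervals (hint _ _) (hint _ _)).symm
  have hneg : (∫ t in (-(L/2))..(0:ℝ), qf γ h t) = ∫ t in (0:ℝ)..(L/2), qf γ h t := by
    have := intervalIntegral.integral_comp_neg (a := (0:ℝ)) (b := L/2) (qf γ h)
    rw [intervalIntegral.integral_congr (g := qf γ h) (fun x _ => qf_even γ h x)] at this
    rw [neg_zero] at this
    exact this.symm
  rw [hsplit, hneg, int_zero_c γ h (L/2) hγ hh hc]
  ring

lemma cell_eq (γ h a b x : ℝ) :
    (∫ ω in a..b, qf γ h (x - ω)) = qΦ γ h (b - a) (x - b) := by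
  rw [qΦ]
  have h1 : x - b + (b - a) = x - a := by ring
  rw [h1]
  exact intervalIntegral.integral_comp_sub_left (qf γ h) x

lemma cell_lb (γ g h a b x : ℝ) (hγ : 1 ≤ γ) (hg : 0 < g)
    (hgmin : ∀ u : ℝ, 0 < u → qF γ g ≤ qF γ u)
    (hh : 0 < h) (hab : a ≤ b) :
    2 * ((b - a) / 2) ^ (2 * γ) * qF γ g ≤ ∫ ω in a..b, qf γ h (x - ω) := by
  rcases eq_or_lt_of_le hab with rfl | hlt
  · simp [Real.zero_rpow (by positivity : 2 * γ ≠ 0)]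
  · have hL : 0 < b - a := by linarith
    have hc : 0 < (b - a) / 2 := by linarith
    rw [cell_eq]
    calc 2 * ((b - a) / 2) ^ (2 * γ) * qF γ g
        ≤ 2 * ((b - a) / 2) ^ (2 * γ) * qF γ (h / ((b - a) / 2)) := by
          have := hgmin (h / ((b - a) / 2)) (by positivity)
          have hpos : (0:ℝ) < 2 * ((b - a) / 2) ^ (2 * γ) := by positivity
          nlinarith
      _ = qΦ γ h (b - a) (-((b - a) / 2)) := (qΦ_val γ h (b - a) hγ hh hL).symm
      _ ≤ qΦ γ h (b - a) (x - b) := (qΦ_min γ h (b - a) hγ hh hL _).1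

lemma cell_eq_iff (γ g h a b x : ℝ) (hγ : 1 ≤ γ) (hg : 0 < g)
    (hgmin : ∀ u : ℝ, 0 < u → qF γ g ≤ qF γ u)
    (hguniq : ∀ u : ℝ, 0 < u → qF γ u = qF γ g → u = g)
    (hh : 0 < h) (hab : a < b) :
    (∫ ω in a..b, qf γ h (x - ω)) = 2 * ((b - a) / 2) ^ (2 * γ) * qF γ g ↔
      x = (a + b) / 2 ∧ h = ((b - a) / 2) * g := by
  have hL : 0 < b - a := by linarith
  have hc : 0 < (b - a) / 2 := by linarith
  constructor
  · intro heq
    have hchain1 : qΦ γ h (b - a) (-((b - a) / 2)) ≤ qΦ γ h (b - a) (x - b) :=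
      (qΦ_min γ h (b - a) hγ hh hL _).1
    have hval : qΦ γ h (b - a) (-((b - a) / 2))
        = 2 * ((b - a) / 2) ^ (2 * γ) * qF γ (h / ((b - a) / 2)) := qΦ_val γ h (b - a) hγ hh hL
    have hchain2 : 2 * ((b - a) / 2) ^ (2 * γ) * qF γ g
        ≤ qΦ γ h (b - a) (-((b - a) / 2)) := by
      rw [hval]
      have := hgmin (h / ((b - a) / 2)) (by positivity)
      have hpos : (0:ℝ) < 2 * ((b - a) / 2) ^ (2 * γ) := by positivity
      nlinarith
    rw [cell_eq] at heq
    have e1 : qΦ γ h (b - a) (x - b) = qΦ γ h (b - a) (-((b - a) / 2)) := by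
      linarith
    have e2 : x - b = -((b - a) / 2) := (qΦ_min γ h (b - a) hγ hh hL _).2 e1
    have e3 : qF γ (h / ((b - a) / 2)) = qF γ g := by
      have hpos : (0:ℝ) < 2 * ((b - a) / 2) ^ (2 * γ) := by positivity
      have : 2 * ((b - a) / 2) ^ (2 * γ) * qF γ (h / ((b - a) / 2))
          = 2 * ((b - a) / 2) ^ (2 * γ) * qF γ g := by
        rw [← hval]; linarith
      exact mul_left_cancel₀ (ne_of_gt hpos) this
    have e4 : h / ((b - a) / 2) = g := hguniq _ (by positivity) e3
    refine ⟨by linarith, ?_⟩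
    field_simp at e4
    linarith
  · rintro ⟨rfl, rfl⟩
    rw [cell_eq]
    have e1 : (a + b) / 2 - b = -((b - a) / 2) := by ring
    rw [e1, qΦ_val γ _ (b - a) hγ (by positivity) hL]
    congr 2
    field_simp

lemma sum_rpow_ge (N : ℕ) (hN : 0 < N) (γ A : ℝ) (hγ : 1 ≤ γ) (L : ℕ → ℝ)
    (hL : ∀ n ∈ Finset.range N, 0 ≤ L n)
    (hsum : ∑ n ∈ Finset.range N, L n = A) :
    (N:ℝ) * (A / N) ^ (2 * γ) ≤ ∑ n ∈ Finset.range N, (L n) ^ (2 * γ) := by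
  have hNR : (0:ℝ) < N := Nat.cast_pos.mpr hN
  have hw : ∑ _n ∈ Finset.range N, (1 / (N:ℝ)) = 1 := by
    simp; field_simp
  have hjen := (convexOn_rpow (p := 2 * γ) (by linarith)).map_sum_le
    (w := fun _ => 1 / (N:ℝ)) (p := L) (t := Finset.range N)
    (fun i _ => by positivity) hw (fun i hi => hL i hi)
  have hsum' : ∑ i ∈ Finset.range N, (1 / (N:ℝ)) • L i = A / N := by
    simp only [smul_eq_mul, ← Finset.mul_sum, hsum]
    ring
  rw [hsum'] at hjen
  simp only [smul_eq_mul, ← Finset.mul_sum] at hjen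
  calc (N:ℝ) * (A / N) ^ (2 * γ) ≤ (N:ℝ) * (1 / N * ∑ i ∈ Finset.range N, L i ^ (2*γ)) := by
        nlinarith
    _ = ∑ i ∈ Finset.range N, L i ^ (2*γ) := by field_simp

lemma sum_rpow_eq (N : ℕ) (hN : 0 < N) (γ A : ℝ) (hγ : 1 ≤ γ) (L : ℕ → ℝ)
    (hL : ∀ n ∈ Finset.range N, 0 ≤ L n)
    (hsum : ∑ n ∈ Finset.range N, L n = A)
    (heq : ∑ n ∈ Finset.range N, (L n) ^ (2 * γ) = (N:ℝ) * (A / N) ^ (2 * γ)) :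
    ∀ n ∈ Finset.range N, L n = A / N := by
  have hNR : (0:ℝ) < N := Nat.cast_pos.mpr hN
  have hw : ∑ _n ∈ Finset.range N, (1 / (N:ℝ)) = 1 := by
    simp; field_simp
  have hsum' : ∑ i ∈ Finset.range N, (1 / (N:ℝ)) • L i = A / N := by
    simp only [smul_eq_mul, ← Finset.mul_sum, hsum]
    ring
  have hkey := (strictConvexOn_rpow (p := 2 * γ) (by linarith)).eq_of_le_map_sum
    (w := fun _ => 1 / (N:ℝ)) (p := L) (t := Finset.range N)
    (fun i _ => by positivity) hw (fun i hi => hL i hi) ?_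
  · intro n hn
    have hall : ∀ m ∈ Finset.range N, L m = L 0 := fun m hm =>
      hkey hm (Finset.mem_range.mpr hN)
    have : ∑ m ∈ Finset.range N, L m = (N:ℝ) * L 0 := by
      rw [Finset.sum_congr rfl hall]
      simp [mul_comm]
    rw [hsum] at this
    rw [hall n hn]
    field_simp
    linarith
  · rw [hsum']
    simp only [smul_eq_mul, ← Finset.mul_sum, heq]
    field_simp
    exact le_rfl

/-- The unique `N`-level parameter optimized quantizer for the uniform density
on `[0, A]` is the uniform scalar quantizer with common parameter
`(A/(2N))·g(γ)`, where `g(γ)` is the unique minimizer of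
`F(u) = ∫₀¹ (ω²+u²)^γ/u dω`, and its minimum average distortion is
`(A/(2N))^{2γ−1} F(g(γ))`.  A quantizer is described by boundaries
`0 = b 0 ≤ b 1 ≤ ⋯ ≤ b N = A`, points `x n ∈ [0, A]`, and parameters
`h n > 0`; its average distortion is
`(1/A)∑ₙ ∫_{b n}^{b (n+1)} ((x n − ω)² + (h n)²)^γ/(h n) dω`. -/
theorem stmt_15 (N : ℕ) (hN : 0 < N) (A γ g : ℝ) (hA : 0 < A) (hγ : 1 ≤ γ)
    (hg : 0 < g)
    (hgmin : ∀ u : ℝ, 0 < u →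
      (∫ ω in (0:ℝ)..1, (ω ^ 2 + g ^ 2) ^ γ / g) ≤
        ∫ ω in (0:ℝ)..1, (ω ^ 2 + u ^ 2) ^ γ / u)
    (hguniq : ∀ u : ℝ, 0 < u →
      (∫ ω in (0:ℝ)..1, (ω ^ 2 + u ^ 2) ^ γ / u) =
        (∫ ω in (0:ℝ)..1, (ω ^ 2 + g ^ 2) ^ γ / g) → u = g) :
    ∀ (b x h : ℕ → ℝ),
      b 0 = 0 → b N = A → (∀ n < N, b n ≤ b (n + 1)) →
      (∀ n < N, x n ∈ Set.Icc (0 : ℝ) A) → (∀ n < N, 0 < h n) →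
      ((A / (2 * N)) ^ (2 * γ - 1) *
          (∫ ω in (0:ℝ)..1, (ω ^ 2 + g ^ 2) ^ γ / g)) ≤
        (1 / A) * ∑ n ∈ Finset.range N,
          ∫ ω in (b n)..(b (n + 1)), ((x n - ω) ^ 2 + (h n) ^ 2) ^ γ / h n ∧
      (((1 / A) * ∑ n ∈ Finset.range N,
            ∫ ω in (b n)..(b (n + 1)), ((x n - ω) ^ 2 + (h n) ^ 2) ^ γ / h n) =
          (A / (2 * N)) ^ (2 * γ - 1) *
            (∫ ω in (0:ℝ)..1, (ω ^ 2 + g ^ 2) ^ γ / g) ↔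
        ∀ n < N,
          b (n + 1) = (n + 1 : ℝ) * A / N ∧
          x n = (2 * n + 1 : ℝ) * A / (2 * N) ∧
          h n = A / (2 * N) * g) := by
  intro b x h hb0 hbN hmono hxmem hh
  have hNR : (0:ℝ) < N := Nat.cast_pos.mpr hN
  have h2N : (0:ℝ) < A / (2 * N) := by positivity
  have hFg : 0 < qF γ g := qF_pos γ g hγ hg
  have hgmin' : ∀ u : ℝ, 0 < u → qF γ g ≤ qF γ u := hgmin
  have hguniq' : ∀ u : ℝ, 0 < u → qF γ u = qF γ g → u = g := hguniq
  have hqFrfl : (∫ ω in (0:ℝ)..1, (ω ^ 2 + g ^ 2) ^ γ / g) = qF γ g := rfl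
  have hDeq : ∀ n : ℕ, (∫ ω in (b n)..(b (n + 1)), ((x n - ω) ^ 2 + (h n) ^ 2) ^ γ / h n)
      = ∫ ω in (b n)..(b (n + 1)), qf γ (h n) (x n - ω) := fun n => rfl
  simp only [hqFrfl, hDeq]
  set K : ℝ := (A / (2 * N)) ^ (2 * γ) with hK
  set B : ℝ := (A / (2 * N)) ^ (2 * γ - 1) * qF γ g with hBdef
  set c0 : ℝ := 2 * qF γ g / 2 ^ (2 * γ) with hc0def
  have h2pow : (0:ℝ) < 2 ^ (2 * γ) := Real.rpow_pos_of_pos (by norm_num) _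
  have hc0pos : 0 < c0 := by rw [hc0def]; positivity
  have hKB : (N:ℝ) * (2 * K * qF γ g) = A * B := by
    rw [hK, hBdef, show 2 * γ = (2 * γ - 1) + 1 by ring, Real.rpow_add h2N, Real.rpow_one]
    field_simp
    ring
  have hsumL : ∑ n ∈ Finset.range N, (b (n + 1) - b n) = A := by
    rw [Finset.sum_range_sub b N, hb0, hbN, sub_zero]
  have hLnonneg : ∀ n ∈ Finset.range N, 0 ≤ b (n + 1) - b n := fun n hn =>
    sub_nonneg.mpr (hmono n (Finset.mem_range.mp hn))
  have hform : ∀ L : ℝ, 0 ≤ L → 2 * (L / 2) ^ (2 * γ) * qF γ g = c0 * L ^ (2 * γ) := by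
    intro L hL
    rw [hc0def, Real.div_rpow hL (by norm_num)]
    field_simp
  have halg : ∀ n' x' p' f' : ℝ, p' ≠ 0 → n' * x' * (2 * f' / p') = n' * (2 * (x' / p') * f') := by
    intro n' x' p' f' hp'
    field_simp
  have hNK : (N:ℝ) * (A / N) ^ (2 * γ) * c0 = (N:ℝ) * (2 * K * qF γ g) := by
    have hsplitK : K = (A / N) ^ (2 * γ) / 2 ^ (2 * γ) := by
      rw [hK, show A / (2 * (N:ℝ)) = (A / N) / 2 by ring,
        Real.div_rpow (by positivity) (by norm_num)]
    rw [hsplitK, hc0def]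
    exact halg _ _ _ _ h2pow.ne' 
  have hJ : (N:ℝ) * (A / N) ^ (2 * γ) ≤ ∑ n ∈ Finset.range N, (b (n + 1) - b n) ^ (2 * γ) :=
    sum_rpow_ge N hN γ A hγ _ hLnonneg hsumL
  have step1 : ∀ n ∈ Finset.range N,
      c0 * (b (n + 1) - b n) ^ (2 * γ)
        ≤ ∫ ω in (b n)..(b (n + 1)), qf γ (h n) (x n - ω) := by
    intro n hn
    have hnN := Finset.mem_range.mp hn
    have := cell_lb γ g (h n) (b n) (b (n + 1)) (x n) hγ hg hgmin' (hh n hnN) (hmono n hnN)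
    rw [hform _ (hLnonneg n hn)] at this
    exact this
  have hchain : A * B ≤ ∑ n ∈ Finset.range N, c0 * (b (n + 1) - b n) ^ (2 * γ) := by
    calc A * B = (N:ℝ) * (2 * K * qF γ g) := hKB.symm
      _ = (N:ℝ) * (A / N) ^ (2 * γ) * c0 := hNK.symm
      _ ≤ (∑ n ∈ Finset.range N, (b (n + 1) - b n) ^ (2 * γ)) * c0 :=
          mul_le_mul_of_nonneg_right hJ hc0pos.le
      _ = ∑ n ∈ Finset.range N, c0 * (b (n + 1) - b n) ^ (2 * γ) := by
          rw [Finset.sum_mul]; exact Finset.sum_congr rfl fun n _ => mul_comm _ _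
  have hchain2 : (∑ n ∈ Finset.range N, c0 * (b (n + 1) - b n) ^ (2 * γ))
      ≤ ∑ n ∈ Finset.range N, ∫ ω in (b n)..(b (n + 1)), qf γ (h n) (x n - ω) :=
    Finset.sum_le_sum step1
  have hlow : A * B ≤ ∑ n ∈ Finset.range N,
      ∫ ω in (b n)..(b (n + 1)), qf γ (h n) (x n - ω) := le_trans hchain hchain2
  constructor
  · calc B = (1 / A) * (A * B) := by field_simp
      _ ≤ (1 / A) * ∑ n ∈ Finset.range N,
            ∫ ω in (b n)..(b (n + 1)), qf γ (h n) (x n - ω) := by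
          apply mul_le_mul_of_nonneg_left hlow (by positivity)
  · constructor
    · intro heq
      have hsumD : (∑ n ∈ Finset.range N,
          ∫ ω in (b n)..(b (n + 1)), qf γ (h n) (x n - ω)) = A * B := by
        have h' : A * (1 / A * ∑ n ∈ Finset.range N,
            ∫ ω in (b n)..(b (n + 1)), qf γ (h n) (x n - ω)) = A * B := by rw [heq]
        rwa [← mul_assoc, mul_one_div, div_self hA.ne', one_mul] at h' 
      have hpsieq : (∑ n ∈ Finset.range N, c0 * (b (n + 1) - b n) ^ (2 * γ)) = A * B := by
        rw [hsumD] at hchain2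
        linarith
      have hDeqpt : ∀ n ∈ Finset.range N,
          (∫ ω in (b n)..(b (n + 1)), qf γ (h n) (x n - ω))
            = c0 * (b (n + 1) - b n) ^ (2 * γ) := by
        have hz : ∑ n ∈ Finset.range N,
            ((∫ ω in (b n)..(b (n + 1)), qf γ (h n) (x n - ω))
              - c0 * (b (n + 1) - b n) ^ (2 * γ)) = 0 := by
          rw [Finset.sum_sub_distrib, hsumD, hpsieq, sub_self]
        have := (Finset.sum_eq_zero_iff_of_nonneg
          (fun n hn => sub_nonneg.mpr (step1 n hn))).mp hz
        intro n hn
        have := this n hn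
        linarith [this]
      have hLsum : (∑ n ∈ Finset.range N, (b (n + 1) - b n) ^ (2 * γ))
          = (N:ℝ) * (A / N) ^ (2 * γ) := by
        have h1 : c0 * ∑ n ∈ Finset.range N, (b (n + 1) - b n) ^ (2 * γ) = A * B := by
          rw [Finset.mul_sum]; exact hpsieq
        have h2 : c0 * ((N:ℝ) * (A / N) ^ (2 * γ)) = A * B := by
          rw [mul_comm, hNK, hKB]
        exact mul_left_cancel₀ hc0pos.ne' (h1.trans h2.symm)
      have hLn : ∀ n ∈ Finset.range N, b (n + 1) - b n = A / N :=
        sum_rpow_eq N hN γ A hγ _ hLnonneg hsumL hLsum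
      have hbn : ∀ n, n ≤ N → b n = n * A / N := by
        intro n hn
        induction n with
        | zero => simpa using hb0
        | succ m ih =>
          have hm : m < N := hn
          have := hLn m (Finset.mem_range.mpr hm)
          have ihm := ih (le_of_lt hm)
          push_cast
          rw [show b (m + 1) = b m + A / N by linarith, ihm]
          ring
      intro n hnN
      have hn' : n ∈ Finset.range N := Finset.mem_range.mpr hnN
      have hLnn : b (n + 1) - b n = A / N := hLn n hn'
      have hbneq : b n = n * A / N := hbn n hnN.le
      have hbsucc : b (n + 1) = (n + 1 : ℝ) * A / N := by
        have : b (n + 1) = b n + A / N := by linarith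
        rw [this, hbneq]; ring
      have hblt : b n < b (n + 1) := by
        have : (0:ℝ) < A / N := by positivity
        linarith
      have hcellval : (∫ ω in (b n)..(b (n + 1)), qf γ (h n) (x n - ω))
          = 2 * ((b (n + 1) - b n) / 2) ^ (2 * γ) * qF γ g := by
        rw [hDeqpt n hn', hform _ (hLnonneg n hn')]
      have hxhn := (cell_eq_iff γ g (h n) (b n) (b (n + 1)) (x n) hγ hg hgmin' hguniq'
        (hh n hnN) hblt).mp hcellval
      refine ⟨hbsucc, ?_, ?_⟩
      · rw [hxhn.1, hbneq, hbsucc]; ring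
      · rw [hxhn.2, hLnn]; ring
    · intro hcond
      have hbn : ∀ n, n ≤ N → b n = n * A / N := by
        intro n hn
        induction n with
        | zero => simpa using hb0
        | succ m ih =>
          have hm : m < N := hn
          rcases hcond m hm with ⟨hb', _, _⟩
          rw [hb']
          push_cast
          ring
      have hcell : ∀ n ∈ Finset.range N,
          (∫ ω in (b n)..(b (n + 1)), qf γ (h n) (x n - ω)) = 2 * K * qF γ g := by
        intro n hn
        have hnN := Finset.mem_range.mp hn
        rcases hcond n hnN with ⟨hb', hx', hh'⟩
        have ha : b n = n * A / N := hbn n hnN.le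
        have hLval : b (n + 1) - b n = A / N := by
          rw [ha, hb']; push_cast; ring
        have hblt : b n < b (n + 1) := by
          have hpos : (0:ℝ) < A / N := by positivity
          linarith
        have := (cell_eq_iff γ g (h n) (b n) (b (n + 1)) (x n) hγ hg hgmin' hguniq'
          (hh n hnN) hblt).mpr ⟨by rw [hx', ha, hb']; push_cast; ring,
            by rw [hh', hLval]; ring⟩
        rw [this, hLval, show A / (N:ℝ) / 2 = A / (2 * N) by ring]
      rw [Finset.sum_congr rfl hcell, Finset.sum_const, Finset.card_range, nsmul_eq_mul, hKB]
      field_simp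
end
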